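/- Let G be a connected graph and c : V(G) → ℝ a weight function with c(v) ≥ 1 for all v ∈ V(G), and let N = ∑_{v∈V(G)} c(v). Then the weighted average eccentricity avec_c(G) = (∑_{v} c(v)e(v))/N is at most the average eccentricity of the path P_{⌈N⌉}. -/

import Mathlib

/-!
Layer cake: `∑ c(v) e(v) = ∑_{t ≥ 1} c({v | t ≤ e(v)})`, and likewise for the path `P_m`,
`m = ⌈N⌉`, in which `min(m, 2(m - t))` vertices have eccentricity at least `t`. Eccentricities
only grow when passing to a spanning tree `T`, and in `T` every eccentricity is attained at one
of the two ends `x, y` of a longest path. Hence, as long as some vertex has eccentricity `≥ t`,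
at most `2(n - t)` vertices do, and the at least `2t - n` remaining ones carry weight at least
`1` each. This bounds each layer of `G` by `N / m` times the corresponding layer of `P_m`.
-/

open SimpleGraph Finset

noncomputable def ecc {V : Type*} [Fintype V] (G : SimpleGraph V) (v : V) : ℕ :=
  Finset.univ.sup (G.dist v)

noncomputable def avec {V : Type*} [Fintype V] (G : SimpleGraph V) : ℝ :=
  (∑ v, (ecc G v : ℝ)) / (Fintype.card V)

namespace SimpleGraph

variable {V : Type*} {G : SimpleGraph V} {a b u v w : V}

lemma Walk.notMem_support_of_length_lt_dist (p : G.Walk u v) (h : p.length < G.dist u w) :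
    w ∉ p.support := by
  classical
  intro hw
  exact h.not_ge ((dist_le _).trans (p.length_takeUntil_le_length hw))

lemma Connected.exists_adj_dist_add_one_eq (hG : G.Connected) (h : u ≠ v) :
    ∃ w, G.Adj u w ∧ G.dist w v + 1 = G.dist u v := by
  obtain ⟨p, hp⟩ := hG.exists_walk_length_eq_dist u v
  cases p with
  | nil => exact absurd rfl h
  | @cons _ w _ hadj q =>
    refine ⟨w, hadj, le_antisymm ?_ ?_⟩
    · simpa [← hp] using dist_le q
    · have := hG.dist_triangle (u := u) (v := w) (w := v)
      rw [dist_eq_one_iff_adj.mpr hadj] at this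
      omega

lemma Connected.exists_dist_eq (hG : G.Connected) {k : ℕ} (hk : k ≤ G.dist u v) :
    ∃ w, G.dist u w = k := by
  obtain ⟨n, hn⟩ := Nat.exists_eq_add_of_le hk
  induction n generalizing v with
  | zero => exact ⟨v, hn⟩
  | succ n ih =>
    have hne : v ≠ u := by rintro rfl; simp at hn
    obtain ⟨w, -, hw⟩ := hG.exists_adj_dist_add_one_eq hne
    rw [dist_comm] at hn
    have hw' : G.dist u w = k + n := by rw [dist_comm]; omega
    exact ih (by omega) hw'

lemma IsAcyclic.dist_eq_length (hG : G.IsAcyclic) {p : G.Walk u v} (hp : p.IsPath) :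
    G.dist u v = p.length := by
  obtain ⟨q, hq, hql⟩ := p.reachable.exists_path_of_dist
  have : q = p := congrArg Subtype.val ((hG.subsingleton_path u v).elim ⟨q, hq⟩ ⟨p, hp⟩)
  rw [← hql, this]

lemma IsTree.dist_eq_add_of_adj (hG : G.IsTree) {v' : V} (hadj : G.Adj v v')
    (ha : G.dist a v' = G.dist a v + 1) (hb : G.dist v b = G.dist v' b + 1) :
    G.dist a b = G.dist a v + G.dist v b := by
  obtain ⟨p, hp⟩ := hG.connected.exists_walk_length_eq_dist a v
  obtain ⟨q, hq⟩ := hG.connected.exists_walk_length_eq_dist v' b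
  have hvp : v' ∉ p.support := p.notMem_support_of_length_lt_dist (by omega)
  have hvq : v ∉ q.support := by
    have := q.reverse.notMem_support_of_length_lt_dist (w := v)
      (by rw [Walk.length_reverse, hq, dist_comm (u := b)]; omega)
    simpa using this
  have hpath : (p.append (.cons hadj q)).IsPath := by
    have hpc := (hG.isAcyclic.isPath_iff_isChain p).mp (p.isPath_of_length_eq_dist hp)
    have hqc := (hG.isAcyclic.isPath_iff_isChain q).mp (q.isPath_of_length_eq_dist hq)
    rw [hG.isAcyclic.isPath_iff_isChain, Walk.edges_append, Walk.edges_cons]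
    refine hpc.append (List.isChain_cons.mpr ⟨?_, hqc⟩) ?_
    · intro e he hev
      exact hvq (q.fst_mem_support_of_mem_edges (hev ▸ List.mem_of_mem_head? he))
    · intro e he f hf hef
      simp only [List.head?_cons, Option.mem_def, Option.some.injEq] at hf
      subst hf hef
      exact hvp (p.snd_mem_support_of_mem_edges (List.mem_of_mem_getLast? he))
  rw [hG.isAcyclic.dist_eq_length hpath]
  simp only [Walk.length_append, Walk.length_cons]
  omega

lemma IsTree.dist_le_max_of_forall_dist_le (hG : G.IsTree) {x y : V}
    (hxy : ∀ a b, G.dist a b ≤ G.dist x y) (v z : V) :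
    G.dist v z ≤ max (G.dist v x) (G.dist v y) := by
  obtain ⟨n, hn⟩ : ∃ n, G.dist v z = n := ⟨_, rfl⟩
  induction n generalizing v with
  | zero => simp [hn]
  | succ n ih =>
    have hne : v ≠ z := by rintro rfl; simp at hn
    obtain ⟨v', hadj, hv'⟩ := hG.connected.exists_adj_dist_add_one_eq hne
    -- if the step `v → v'` towards `z` leads away from an end `x` of a longest path, then the
    -- geodesic from `x` to `z` passes through `v`, so `z` is no farther from `v` than `y` is
    have away {x y : V} (hxy : ∀ a b, G.dist a b ≤ G.dist x y)
        (hx : G.dist x v' = G.dist x v + 1) : G.dist v z ≤ G.dist v y := by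
      have := hG.dist_eq_add_of_adj hadj hx hv'.symm
      have := hxy x z
      have := hG.connected.dist_triangle (u := x) (v := v) (w := y)
      rw [dist_comm (u := x) (v := v)] at *
      omega
    rcases hG.dist_eq_dist_add_one_of_adj x hadj with hx | hx
    · rcases hG.dist_eq_dist_add_one_of_adj y hadj with hy | hy
      · have := ih v' (by omega)
        simp only [dist_comm (v := x), dist_comm (v := y)] at hx hy this ⊢
        omega
      · exact (away (x := y) (fun a b ↦ (hxy a b).trans_eq dist_comm) hy).trans (le_max_left _ _)
    · exact (away hxy hx).trans (le_max_right _ _)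

end SimpleGraph

section Eccentricity

variable {V : Type*} [Fintype V] {G : SimpleGraph V}

lemma dist_le_ecc (G : SimpleGraph V) (v w : V) : G.dist v w ≤ ecc G v :=
  le_sup (mem_univ w)

lemma exists_dist_eq_ecc [Nonempty V] (G : SimpleGraph V) (v : V) : ∃ w, G.dist v w = ecc G v :=
  let ⟨w, _, hw⟩ := exists_mem_eq_sup univ univ_nonempty (G.dist v)
  ⟨w, hw.symm⟩

lemma ecc_lt_card (hG : G.Connected) (v : V) : ecc G v < Fintype.card V := by
  have := hG.nonempty
  obtain ⟨w, hw⟩ := exists_dist_eq_ecc G v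
  obtain ⟨p, hp, hpl⟩ := hG.exists_path_of_dist v w
  exact hw ▸ hpl ▸ hp.length_lt

lemma ecc_le_ecc_of_le {T : SimpleGraph V} (hle : T ≤ G) (hT : T.Connected) (v : V) :
    ecc G v ≤ ecc T v :=
  sup_mono_fun fun w _ ↦ (hT v w).dist_anti hle

lemma card_filter_le_dist_add_le (hG : G.Connected) {x y : V} {t : ℕ} (ht : t ≤ G.dist x y) :
    #{v | t ≤ G.dist x v} + t ≤ Fintype.card V := by
  have hnear : t ≤ #{v | ¬ t ≤ G.dist x v} := by
    simpa using card_le_card_of_surjOn (G.dist x) (t := range t) fun k hk ↦ by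
      obtain ⟨w, hw⟩ := hG.exists_dist_eq (u := x) (le_of_lt ((mem_range.mp hk).trans_le ht))
      exact ⟨w, by simp [hw, mem_range.mp hk], hw⟩
  have := card_filter_add_card_filter_not (s := univ) (fun v ↦ t ≤ G.dist x v)
  rw [card_univ] at this
  omega

lemma card_filter_le_ecc_add_two_mul_le (hG : G.Connected) {v₀ : V} {t : ℕ}
    (ht : t ≤ ecc G v₀) : #{v | t ≤ ecc G v} + 2 * t ≤ 2 * Fintype.card V := by
  classical
  have := hG.nonempty
  obtain ⟨T, hTG, hT⟩ := hG.exists_isTree_le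
  obtain ⟨⟨x, y⟩, hxy⟩ := Finite.exists_max fun p : V × V ↦ T.dist p.1 p.2
  replace hxy (a b : V) : T.dist a b ≤ T.dist x y := hxy (a, b)
  have far (v : V) (hv : t ≤ ecc G v) : t ≤ T.dist x v ∨ t ≤ T.dist y v := by
    obtain ⟨w, hw⟩ := exists_dist_eq_ecc T v
    have := hT.dist_le_max_of_forall_dist_le hxy v w
    have := ecc_le_ecc_of_le hTG hT.connected v
    rw [SimpleGraph.dist_comm (u := x), SimpleGraph.dist_comm (u := y)]
    omega
  have hsub : ({v | t ≤ ecc G v} : Finset V) ⊆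
      ({v | t ≤ T.dist x v} : Finset V) ∪ ({v | t ≤ T.dist y v} : Finset V) :=
    fun v hv ↦ by simpa using far v (by simpa using hv)
  obtain ⟨w₀, hw₀⟩ := exists_dist_eq_ecc T v₀
  have htxy : t ≤ T.dist x y :=
    ht.trans <| (ecc_le_ecc_of_le hTG hT.connected v₀).trans (hw₀ ▸ hxy v₀ w₀)
  have := card_filter_le_dist_add_le hT.connected htxy
  have := card_filter_le_dist_add_le hT.connected (x := y) (y := x)
    (htxy.trans_eq SimpleGraph.dist_comm)
  have := (card_le_card hsub).trans (card_union_le _ _)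
  omega

end Eccentricity

lemma SimpleGraph.pathGraph_val_le_val_add_length {m : ℕ} {i j : Fin m}
    (p : (pathGraph m).Walk i j) : (i : ℕ) ≤ j + p.length := by
  induction p with
  | nil => simp
  | cons h q ih =>
    rw [pathGraph_adj] at h
    rw [Walk.length_cons]
    omega

lemma SimpleGraph.pathGraph_val_le_val_add_dist {m : ℕ} (i j : Fin m) :
    (i : ℕ) ≤ j + (pathGraph m).dist i j := by
  obtain ⟨p, hp⟩ := (pathGraph_preconnected m i j).exists_walk_length_eq_dist
  exact hp ▸ pathGraph_val_le_val_add_length p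

lemma max_le_ecc_pathGraph {m : ℕ} (i : Fin m) :
    max (i : ℕ) (m - 1 - i) ≤ ecc (pathGraph m) i := by
  obtain ⟨k, rfl⟩ : ∃ k, m = k + 1 := ⟨m - 1, by have := i.is_lt; omega⟩
  have h0 := pathGraph_val_le_val_add_dist i 0
  have hk := pathGraph_val_le_val_add_dist (Fin.last k) i
  have := dist_le_ecc (pathGraph (k + 1)) i 0
  have := dist_le_ecc (pathGraph (k + 1)) i (Fin.last k)
  rw [Fin.val_zero] at h0
  rw [Fin.val_last, SimpleGraph.dist_comm] at hk
  omega

lemma min_le_card_filter_le_max (m t : ℕ) :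
    min m (2 * (m - t)) ≤ #{i ∈ range m | t ≤ max i (m - 1 - i)} := by
  have hnear : {i ∈ range m | ¬ t ≤ max i (m - 1 - i)} = Ico (m - t) (min t m) := by
    ext i
    simp only [mem_filter, mem_range, mem_Ico]
    omega
  have := card_filter_add_card_filter_not (s := range m) (fun i ↦ t ≤ max i (m - 1 - i))
  rw [hnear, card_range, Nat.card_Ico] at this
  omega

lemma Finset.sum_nsmul_eq_sum_Icc_sum_filter {ι M : Type*} [AddCommMonoid M] (s : Finset ι)
    (f : ι → ℕ) (c : ι → M) {K : ℕ} (hf : ∀ a ∈ s, f a ≤ K) :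
    ∑ a ∈ s, f a • c a = ∑ k ∈ Icc 1 K, ∑ a ∈ s with k ≤ f a, c a := by
  rw [← sum_comm' (s := s) (t := fun a ↦ Icc 1 (f a)) (s' := fun k ↦ {a ∈ s | k ≤ f a})]
  · simp
  · intro a k
    simp only [mem_Icc, mem_filter]
    have := hf a
    grind

section Weighted

variable {V : Type*} [Fintype V] {G : SimpleGraph V} {c : V → ℝ} {m : ℕ}

lemma mul_sum_filter_le_ecc_le (hG : G.Connected) (hc : ∀ v, 1 ≤ c v)
    (hVm : Fintype.card V ≤ m) (hcm : ∑ v, c v ≤ m) (t : ℕ) :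
    m * ∑ v with t ≤ ecc G v, c v ≤ (∑ v, c v) * (min m (2 * (m - t)) : ℕ) := by
  set N := ∑ v, c v
  set k := #{v | ¬ t ≤ ecc G v}
  have hN0 : 0 ≤ N := sum_nonneg fun v _ ↦ zero_le_one.trans (hc v)
  have hFk : ∑ v with t ≤ ecc G v, c v ≤ N - k := by
    have := sum_filter_add_sum_filter_not univ (fun v ↦ t ≤ ecc G v) c
    have : (k : ℝ) ≤ ∑ v with ¬ t ≤ ecc G v, c v := by
      simpa only [nsmul_eq_mul, mul_one] using card_nsmul_le_sum _ c 1 fun v _ ↦ hc v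
    linarith
  rcases eq_empty_or_nonempty ({v | t ≤ ecc G v} : Finset V) with hempty | ⟨v₀, hv₀⟩
  · rw [hempty, sum_empty, mul_zero]
    positivity
  have hcount := card_filter_le_ecc_add_two_mul_le hG (t := t) (by simpa using hv₀)
  rcases le_total m (2 * (m - t)) with hmin | hmin
  · rw [min_eq_left hmin, mul_comm N]
    have : (0 : ℝ) ≤ k := k.cast_nonneg
    gcongr
    linarith
  · rw [min_eq_right hmin]
    have htm : t ≤ m := by omega
    have hlow : (2 * t : ℝ) ≤ Fintype.card V + k := by
      have := card_filter_add_card_filter_not (s := univ) (fun v ↦ t ≤ ecc G v)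
      rw [card_univ] at this
      exact_mod_cast (by omega : 2 * t ≤ Fintype.card V + k)
    have hVm' : (Fintype.card V : ℝ) ≤ m := by exact_mod_cast hVm
    push_cast [Nat.cast_sub htm]
    -- `m (N - k) ≤ N (2m - n - k) ≤ 2 N (m - t)`, using `n ≤ m`, `N ≤ m` and `2t ≤ n + k`
    nlinarith [mul_le_mul_of_nonneg_left hlow hN0, mul_nonneg hN0 (sub_nonneg.mpr hVm'),
      mul_nonneg k.cast_nonneg (sub_nonneg.mpr hcm),
      mul_le_mul_of_nonneg_left hFk m.cast_nonneg]

lemma mul_sum_mul_ecc_le (hG : G.Connected) (hc : ∀ v, 1 ≤ c v)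
    (hVm : Fintype.card V ≤ m) (hcm : ∑ v, c v ≤ m) :
    m * ∑ v, c v * ecc G v ≤ (∑ v, c v) * ∑ i ∈ range m, ((max i (m - 1 - i) : ℕ) : ℝ) := by
  have hG_layers : ∑ v, c v * ecc G v = ∑ k ∈ Icc 1 (m - 1), ∑ v with k ≤ ecc G v, c v := by
    rw [← sum_nsmul_eq_sum_Icc_sum_filter univ (ecc G) c fun v _ ↦ by
      have := ecc_lt_card hG v
      omega]
    simp [nsmul_eq_mul, mul_comm]
  have hP_layers : ∑ i ∈ range m, ((max i (m - 1 - i) : ℕ) : ℝ) =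
      ∑ k ∈ Icc 1 (m - 1), (#{i ∈ range m | k ≤ max i (m - 1 - i)} : ℝ) := by
    simpa using sum_nsmul_eq_sum_Icc_sum_filter (range m) (fun i ↦ max i (m - 1 - i))
      (fun _ ↦ (1 : ℝ)) fun i hi ↦ by
        simp only [mem_range] at hi
        omega
  rw [hG_layers, hP_layers, mul_sum, mul_sum]
  refine sum_le_sum fun k _ ↦ ?_
  calc (m : ℝ) * ∑ v with k ≤ ecc G v, c v ≤ (∑ v, c v) * (min m (2 * (m - k)) : ℕ) :=
        mul_sum_filter_le_ecc_le hG hc hVm hcm k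
    _ ≤ (∑ v, c v) * #{i ∈ range m | k ≤ max i (m - 1 - i)} := by
        gcongr
        · exact sum_nonneg fun v _ ↦ zero_le_one.trans (hc v)
        · exact min_le_card_filter_le_max m k

end Weighted

theorem stmt2 {V : Type*} [Fintype V] (G : SimpleGraph V) (hG : G.Connected)
    (c : V → ℝ) (hc : ∀ v, 1 ≤ c v) (N : ℝ) (hN : N = ∑ v, c v) :
    (∑ v, c v * (ecc G v : ℝ)) / N ≤ avec (SimpleGraph.pathGraph ⌈N⌉₊) := by
  have := hG.nonempty
  set m := ⌈N⌉₊
  have hVN : (Fintype.card V : ℝ) ≤ N := by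
    simpa [hN] using card_nsmul_le_sum univ c 1 fun v _ ↦ hc v
  have hN0 : 0 < N := lt_of_lt_of_le (by exact_mod_cast Fintype.card_pos) hVN
  have hNm : N ≤ m := Nat.le_ceil N
  rw [avec, Fintype.card_fin, div_le_div_iff₀ hN0 (hN0.trans_le hNm)]
  calc (∑ v, c v * ecc G v) * m = m * ∑ v, c v * ecc G v := mul_comm _ _
    _ ≤ N * ∑ i ∈ range m, ((max i (m - 1 - i) : ℕ) : ℝ) :=
      hN ▸ mul_sum_mul_ecc_le hG hc (by exact_mod_cast hVN.trans hNm) (hN ▸ hNm)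
    _ = N * ∑ i : Fin m, ((max (i : ℕ) (m - 1 - i) : ℕ) : ℝ) := by
      rw [Fin.sum_univ_eq_sum_range (fun i ↦ ((max i (m - 1 - i) : ℕ) : ℝ))]
    _ ≤ N * ∑ i : Fin m, (ecc (pathGraph m) i : ℝ) := by
      gcongr with i
      exact_mod_cast max_le_ecc_pathGraph i
    _ = (∑ i : Fin m, (ecc (pathGraph m) i : ℝ)) * N := mul_comm _ _
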